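/- arXiv:2308.00509 — 3 statements merged into one kernel-verified Lean document; each statement's English description precedes it below -/
import Mathlib

section
/- For the two-point case: for all real a, b and ρ ∈ [0,1], (a² + ρ²b²)^{1/2} ≤ ((|a-b|^{1+ρ²} + |a+b|^{1+ρ²})/2)^{1/(1+ρ²)}. -/
/-!
Write `p = 1 + ρ²`, so `1 ≤ p ≤ 2`; after raising both sides to the power `p` the claim is
`(a² + (p-1) b²)^(p/2) ≤ (|a-b|^p + |a+b|^p)/2`. Symmetry and homogeneity reduce it to `a = 1`,
`b = ε ∈ [0, 1]`. Bernoulli's inequality bounds the left side by `1 + p(p-1)ε²/2`, while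
`φ(ε) = (1-ε)^p + (1+ε)^p` satisfies `φ(ε) ≥ 2 + p(p-1)ε²`: indeed `φ(0) = 2`, `φ'(0) = 0` and
`φ''(t) = p(p-1)((1+t)^(p-2) + (1-t)^(p-2)) ≥ 2p(p-1)` by AM-GM, since `(1+t)(1-t) ≤ 1` and `p ≤ 2`.
-/

open Real Set

theorem two_le_rpow_add_rpow_of_mul_le_one {s x y : ℝ} (hs : s ≤ 0) (hx : 0 < x) (hy : 0 < y)
    (hxy : x * y ≤ 1) : 2 ≤ x ^ s + y ^ s := by
  have hprod : 1 ≤ x ^ s * y ^ s := by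
    rw [← mul_rpow hx.le hy.le]
    exact one_le_rpow_of_pos_of_le_one_of_nonpos (mul_pos hx hy) hxy hs
  nlinarith [sq_nonneg (x ^ s - y ^ s), rpow_pos_of_pos hx s, rpow_pos_of_pos hy s]

theorem hasDerivAt_one_add_rpow {q x : ℝ} (hx : 0 < 1 + x) :
    HasDerivAt (fun t : ℝ => (1 + t) ^ q) (q * (1 + x) ^ (q - 1)) x := by
  simpa using ((hasDerivAt_id x).const_add 1).rpow_const (p := q) (Or.inl hx.ne')

theorem hasDerivAt_one_sub_rpow {q x : ℝ} (hx : 0 < 1 - x) :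
    HasDerivAt (fun t : ℝ => (1 - t) ^ q) (-(q * (1 - x) ^ (q - 1))) x := by
  simpa using ((hasDerivAt_id x).const_sub 1).rpow_const (p := q) (Or.inl hx.ne')

theorem monotoneOn_Icc_of_hasDerivAt_nonneg {f f' : ℝ → ℝ} {a b : ℝ}
    (hf : ContinuousOn f (Icc a b)) (hf' : ∀ x ∈ Ioo a b, HasDerivAt f (f' x) x)
    (hf'₀ : ∀ x ∈ Ioo a b, 0 ≤ f' x) : MonotoneOn f (Icc a b) := by
  refine monotoneOn_of_hasDerivWithinAt_nonneg (f' := f') (convex_Icc a b) hf (fun x hx => ?_)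
    (fun x hx => ?_)
  · rw [interior_Icc] at hx ⊢; exact (hf' x hx).hasDerivWithinAt
  · rw [interior_Icc] at hx; exact hf'₀ x hx

theorem two_mul_mul_le_one_add_rpow_sub_one_sub_rpow {q ε : ℝ} (hq0 : 0 ≤ q) (hq1 : q ≤ 1)
    (hε0 : 0 ≤ ε) (hε1 : ε ≤ 1) : 2 * q * ε ≤ (1 + ε) ^ q - (1 - ε) ^ q := by
  have key := monotoneOn_Icc_of_hasDerivAt_nonneg
    (f := fun t => (1 + t) ^ q - (1 - t) ^ q - 2 * q * t)
    (f' := fun x => q * ((1 + x) ^ (q - 1) + (1 - x) ^ (q - 1) - 2))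
    (by fun_prop (disch := assumption))
    (fun x hx => by
      have := ((hasDerivAt_one_add_rpow (q := q) (by linarith [hx.1])).sub
        (hasDerivAt_one_sub_rpow (q := q) (by linarith [hx.2]))).sub
        ((hasDerivAt_id x).const_mul (2 * q))
      exact this.congr_deriv (by ring))
    (fun x hx => mul_nonneg hq0 <| sub_nonneg.2 <| two_le_rpow_add_rpow_of_mul_le_one
      (by linarith) (by linarith [hx.1]) (by linarith [hx.2]) (by nlinarith [sq_nonneg x]))
    (left_mem_Icc.2 zero_le_one) ⟨hε0, hε1⟩ hε0
  simp only [add_zero, one_rpow, sub_zero, sub_self, mul_zero, sub_nonneg] at key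
  linarith

theorem two_add_mul_sq_le_one_sub_rpow_add_one_add_rpow {p ε : ℝ} (hp1 : 1 ≤ p) (hp2 : p ≤ 2)
    (hε0 : 0 ≤ ε) (hε1 : ε ≤ 1) : 2 + p * (p - 1) * ε ^ 2 ≤ (1 - ε) ^ p + (1 + ε) ^ p := by
  have key := monotoneOn_Icc_of_hasDerivAt_nonneg
    (f := fun t => (1 - t) ^ p + (1 + t) ^ p - p * (p - 1) * t ^ 2)
    (f' := fun x => p * ((1 + x) ^ (p - 1) - (1 - x) ^ (p - 1) - 2 * (p - 1) * x))
    (by fun_prop (disch := linarith))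
    (fun x hx => by
      have := ((hasDerivAt_one_sub_rpow (q := p) (by linarith [hx.2])).add
        (hasDerivAt_one_add_rpow (q := p) (by linarith [hx.1]))).sub
        ((hasDerivAt_pow 2 x).const_mul (p * (p - 1)))
      exact this.congr_deriv (by ring))
    (fun x hx => mul_nonneg (by linarith) <| sub_nonneg.2 <|
      two_mul_mul_le_one_add_rpow_sub_one_sub_rpow (by linarith) (by linarith) hx.1.le hx.2.le)
    (left_mem_Icc.2 zero_le_one) ⟨hε0, hε1⟩ hε0
  simp only [sub_zero, one_rpow, add_zero, zero_pow two_ne_zero, mul_zero] at key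
  linarith

theorem one_add_mul_sq_rpow_le {p ε : ℝ} (hp1 : 1 ≤ p) (hp2 : p ≤ 2) (hε0 : 0 ≤ ε)
    (hε1 : ε ≤ 1) :
    (1 + (p - 1) * ε ^ 2) ^ (p / 2) ≤ ((1 - ε) ^ p + (1 + ε) ^ p) / 2 := by
  have hcore := two_add_mul_sq_le_one_sub_rpow_add_one_add_rpow hp1 hp2 hε0 hε1
  calc (1 + (p - 1) * ε ^ 2) ^ (p / 2) ≤ 1 + p / 2 * ((p - 1) * ε ^ 2) :=
        rpow_one_add_le_one_add_mul_self (by nlinarith) (by linarith) (by linarith)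
    _ ≤ ((1 - ε) ^ p + (1 + ε) ^ p) / 2 := by linarith

theorem sq_add_mul_sq_rpow_le_of_le {p a b : ℝ} (hp1 : 1 ≤ p) (hp2 : p ≤ 2) (hb : 0 ≤ b)
    (hba : b ≤ a) : (a ^ 2 + (p - 1) * b ^ 2) ^ (p / 2) ≤ ((a - b) ^ p + (a + b) ^ p) / 2 := by
  obtain rfl | ha := (hb.trans hba).eq_or_lt
  · obtain rfl : b = 0 := le_antisymm hba hb
    simp [zero_rpow (by positivity : p / 2 ≠ 0), zero_rpow (by positivity : p ≠ 0)]
  obtain ⟨ε, hε0, hε1, rfl⟩ : ∃ ε, 0 ≤ ε ∧ ε ≤ 1 ∧ b = a * ε :=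
    ⟨b / a, div_nonneg hb ha.le, (div_le_one ha).2 hba, by field_simp⟩
  have hεa : 0 ≤ 1 - ε := by linarith
  have hscale : (a ^ 2) ^ (p / 2) = a ^ p := by
    rw [← rpow_two, ← rpow_mul ha.le]; ring_nf
  calc (a ^ 2 + (p - 1) * (a * ε) ^ 2) ^ (p / 2)
      = a ^ p * (1 + (p - 1) * ε ^ 2) ^ (p / 2) := by
        rw [← hscale, ← mul_rpow (by positivity) (by nlinarith)]; ring_nf
    _ ≤ a ^ p * (((1 - ε) ^ p + (1 + ε) ^ p) / 2) :=
        mul_le_mul_of_nonneg_left (one_add_mul_sq_rpow_le hp1 hp2 hε0 hε1) (by positivity)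
    _ = ((a - a * ε) ^ p + (a + a * ε) ^ p) / 2 := by
        rw [show a - a * ε = a * (1 - ε) by ring, show a + a * ε = a * (1 + ε) by ring,
          mul_rpow ha.le hεa, mul_rpow ha.le (by linarith)]; ring

theorem abs_sub_rpow_add_abs_add_rpow (a b p : ℝ) :
    |a - b| ^ p + |a + b| ^ p = |(|a| - |b|)| ^ p + |(|a| + |b|)| ^ p := by
  rcases abs_choice a with ha | ha <;> rcases abs_choice b with hb | hb <;> rw [ha, hb]
  · rw [sub_neg_eq_add, ← sub_eq_add_neg, add_comm]
  · rw [← abs_neg (-a - b), ← abs_neg (-a + b), add_comm]; ring_nf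
  · rw [← abs_neg (-a - -b), ← abs_neg (-a + -b)]; ring_nf

theorem sq_add_mul_sq_rpow_le_of_abs_le {p a b : ℝ} (hp1 : 1 ≤ p) (hp2 : p ≤ 2)
    (hba : |b| ≤ |a|) :
    (a ^ 2 + (p - 1) * b ^ 2) ^ (p / 2) ≤ (|a - b| ^ p + |a + b| ^ p) / 2 := by
  have h := sq_add_mul_sq_rpow_le_of_le hp1 hp2 (abs_nonneg b) hba
  rwa [sq_abs, sq_abs, ← abs_of_nonneg (sub_nonneg.2 hba),
    ← abs_of_nonneg (add_nonneg (abs_nonneg a) (abs_nonneg b)),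
    ← abs_sub_rpow_add_abs_add_rpow] at h

theorem sq_add_mul_sq_rpow_le {p : ℝ} (hp1 : 1 ≤ p) (hp2 : p ≤ 2) (a b : ℝ) :
    (a ^ 2 + (p - 1) * b ^ 2) ^ (p / 2) ≤ (|a - b| ^ p + |a + b| ^ p) / 2 := by
  rcases le_total |b| |a| with hba | hab
  · exact sq_add_mul_sq_rpow_le_of_abs_le hp1 hp2 hba
  have hsq : a ^ 2 ≤ b ^ 2 := sq_le_sq.2 hab
  -- as `p - 1 ≤ 1`, giving the larger square the full weight only increases the left side
  calc (a ^ 2 + (p - 1) * b ^ 2) ^ (p / 2) ≤ (b ^ 2 + (p - 1) * a ^ 2) ^ (p / 2) :=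
        rpow_le_rpow (by nlinarith) (by nlinarith) (by linarith)
    _ ≤ (|b - a| ^ p + |b + a| ^ p) / 2 := sq_add_mul_sq_rpow_le_of_abs_le hp1 hp2 hab
    _ = (|a - b| ^ p + |a + b| ^ p) / 2 := by rw [abs_sub_comm, add_comm b]

theorem two_point_hypercontractivity (a b ρ : ℝ) (hρ0 : 0 ≤ ρ) (hρ1 : ρ ≤ 1) :
    (a ^ 2 + ρ ^ 2 * b ^ 2) ^ ((2 : ℝ)⁻¹)
      ≤ ((|a - b| ^ (1 + ρ ^ 2) + |a + b| ^ (1 + ρ ^ 2)) / 2) ^ ((1 + ρ ^ 2)⁻¹) := by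
  have hρ2 : ρ ^ 2 ≤ 1 := pow_le_one₀ hρ0 hρ1
  have h := sq_add_mul_sq_rpow_le (p := 1 + ρ ^ 2) (by nlinarith) (by linarith) a b
  rw [add_sub_cancel_left] at h
  have hX : 0 ≤ a ^ 2 + ρ ^ 2 * b ^ 2 := by positivity
  rw [le_rpow_inv_iff_of_pos (rpow_nonneg hX _) (by positivity) (by positivity), ← rpow_mul hX]
  rwa [inv_mul_eq_div]
end

section
/- (KKL edge-isoperimetric inequality) There exists a constant c > 0 such that for every n and every Boolean function f : {-1,1}^n → {-1,1} with E[f] = 0, max_{k∈[n]} I_k(f) ≥ exp(−c·I(f)). -/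
open Finset

noncomputable def bSgn (b : Bool) : ℝ := if b then 1 else -1

noncomputable def bChi {n : ℕ} (S : Finset (Fin n)) (x : Fin n → Bool) : ℝ :=
  ∏ i ∈ S, bSgn (x i)

noncomputable def bExpect {n : ℕ} (g : (Fin n → Bool) → ℝ) : ℝ :=
  (∑ x : Fin n → Bool, g x) / 2 ^ n

noncomputable def bFourier {n : ℕ} (f : (Fin n → Bool) → ℝ) (S : Finset (Fin n)) : ℝ :=
  bExpect fun x => f x * bChi S x

def bFlip1 {n : ℕ} (k : Fin n) (x : Fin n → Bool) : Fin n → Bool :=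
  Function.update x k (!(x k))

def bFlipS {n : ℕ} (T : Finset (Fin n)) (x : Fin n → Bool) : Fin n → Bool :=
  fun i => if i ∈ T then !(x i) else x i

/-- combinatorial influence of bit `k` -/
noncomputable def inflC {n : ℕ} (f : (Fin n → Bool) → ℝ) (k : Fin n) : ℝ :=
  bExpect fun x => if f x ≠ f (bFlip1 k x) then 1 else 0

/-- spectral influence of bit `k` -/
noncomputable def inflS {n : ℕ} (f : (Fin n → Bool) → ℝ) (k : Fin n) : ℝ :=
  ∑ S ∈ univ.filter (fun S : Finset (Fin n) => k ∈ S), bFourier f S ^ 2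

/-- total influence (spectral form) -/
noncomputable def totInfl {n : ℕ} (f : (Fin n → Bool) → ℝ) : ℝ :=
  ∑ S : Finset (Fin n), (S.card : ℝ) * bFourier f S ^ 2

/-- spectrum entropy, base 2; terms with zero coefficient contribute 0 -/
noncomputable def specEnt {n : ℕ} (f : (Fin n → Bool) → ℝ) : ℝ :=
  ∑ S : Finset (Fin n), bFourier f S ^ 2 * Real.logb 2 (1 / bFourier f S ^ 2)

/-- `f` is Boolean (±1)-valued -/
def IsBooleanFn {n : ℕ} (f : (Fin n → Bool) → ℝ) : Prop :=
  ∀ x, f x = 1 ∨ f x = -1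

/-!
The derivative `D_k f = (f - f ∘ flip_k) / 2` of a Boolean function takes values in
`{-1, 0, 1}` and `I_k(f) = E[(D_k f)²]`. For such a `g`, with `T = T_{1/3}` the noise operator,
`Q = ∑_S 3^{-|S|} ĝ(S)² = E[g · T g]`; two Cauchy–Schwarz steps (using `g³ = g`) together with
Bonami's inequality `E[(T g)⁴] ≤ Q²` give `Q² ≤ E[g²]³`. For `g = D_k f` this bounds
`∑_{S ∋ k} 3^{-|S|} f̂(S)²` by `I_k(f)^{3/2}`, and summing over `k`,
`∑_S |S| 3^{-|S|} f̂(S)² ≤ √(max_k I_k(f)) · I(f)`. On the other hand the `f̂(S)²` are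
probability weights vanishing at `S = ∅`, so Jensen's inequality for `exp` bounds the same sum
from below by `exp(-2 I(f))`. Squaring, `max_k I_k(f) ≥ exp(-4 I(f)) / I(f)² ≥ exp(-6 I(f))`.
-/

open scoped BigOperators

section Characters

variable {n : ℕ}

lemma bSgn_sq (b : Bool) : bSgn b ^ 2 = 1 := by cases b <;> simp [bSgn]

lemma bSgn_not (b : Bool) : bSgn (!b) = -bSgn b := by cases b <;> simp [bSgn]

lemma bFlip1_apply_self (k : Fin n) (x : Fin n → Bool) : bFlip1 k x k = !x k := by
  simp [bFlip1]

lemma bFlip1_involutive (k : Fin n) : Function.Involutive (bFlip1 k) := by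
  intro x
  funext i
  by_cases h : i = k
  · subst h; simp [bFlip1]
  · simp [bFlip1, Function.update_of_ne h]

lemma sum_comp_bFlip1 (k : Fin n) (u : (Fin n → Bool) → ℝ) :
    ∑ x, u (bFlip1 k x) = ∑ x, u x :=
  (bFlip1_involutive k).bijective.sum_comp u

lemma bChi_bFlip1 (S : Finset (Fin n)) (k : Fin n) (x : Fin n → Bool) :
    bChi S (bFlip1 k x) = (if k ∈ S then -1 else 1) * bChi S x := by
  have hsgn (i : Fin n) :
      bSgn (bFlip1 k x i) = Function.update (fun i => bSgn (x i)) k (-bSgn (x k)) i := by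
    rw [bFlip1, Function.apply_update (fun _ => bSgn), bSgn_not]
  simp only [bChi, hsgn]
  split_ifs with hk
  · rw [prod_update_of_mem hk, ← mul_prod_erase S _ hk, sdiff_singleton_eq_erase]; ring
  · rw [prod_update_of_notMem hk, one_mul]

lemma sum_bSgn_mul_eq_zero {k : Fin n} {u : (Fin n → Bool) → ℝ}
    (hu : ∀ x, u (bFlip1 k x) = u x) : ∑ x, bSgn (x k) * u x = 0 := by
  have h := sum_comp_bFlip1 k fun x => bSgn (x k) * u x
  simp only [bFlip1_apply_self, bSgn_not, hu, neg_mul, sum_neg_distrib] at h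
  linarith

lemma sum_bChi_mul_bChi (x y : Fin n → Bool) :
    ∑ S : Finset (Fin n), bChi S x * bChi S y = if x = y then 2 ^ n else 0 := by
  have hfactor (i : Fin n) : bSgn (x i) * bSgn (y i) + 1 = if x i = y i then 2 else 0 := by
    cases x i <;> cases y i <;> norm_num [bSgn]
  simp_rw [bChi, ← prod_mul_distrib, ← powerset_univ, ← prod_add_one, hfactor, prod_ite_zero]
  simp [funext_iff]

end Characters

section Fourier

variable {n : ℕ}

lemma bExpect_eq_expect (g : (Fin n → Bool) → ℝ) : bExpect g = 𝔼 x, g x := by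
  rw [bExpect, Fintype.expect_eq_sum_div_card]; simp

lemma bExpect_const (c : ℝ) : bExpect (fun _ : Fin n → Bool => c) = c := by
  simp [bExpect_eq_expect]

lemma bExpect_nonneg {g : (Fin n → Bool) → ℝ} (hg : ∀ x, 0 ≤ g x) : 0 ≤ bExpect g := by
  rw [bExpect_eq_expect]; exact expect_nonneg fun x _ => hg x

lemma bExpect_mul_sq_le (u v : (Fin n → Bool) → ℝ) :
    bExpect (fun x => u x * v x) ^ 2 ≤
      bExpect (fun x => u x ^ 2) * bExpect (fun x => v x ^ 2) := by
  simp only [bExpect_eq_expect]; exact expect_mul_sq_le_sq_mul_sq _ _ _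

lemma sum_bFourier_mul_bChi (f : (Fin n → Bool) → ℝ) (x : Fin n → Bool) :
    ∑ S, bFourier f S * bChi S x = f x := by
  simp_rw [bFourier, bExpect, div_mul_eq_mul_div, ← sum_div, sum_mul, mul_assoc]
  rw [sum_comm]
  simp_rw [← mul_sum, sum_bChi_mul_bChi]
  simp

lemma bExpect_mul_sum_bChi (g : (Fin n → Bool) → ℝ) (c : Finset (Fin n) → ℝ) :
    bExpect (fun x => g x * ∑ S, c S * bChi S x) = ∑ S, c S * bFourier g S := by
  simp_rw [bFourier, bExpect_eq_expect, mul_sum, mul_expect]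
  rw [expect_sum_comm]
  congr! 2; ring

lemma bExpect_mul_eq_sum_bFourier_mul (f g : (Fin n → Bool) → ℝ) :
    bExpect (fun x => f x * g x) = ∑ S, bFourier f S * bFourier g S := by
  simp_rw [mul_comm (bFourier f _), ← bExpect_mul_sum_bChi, sum_bFourier_mul_bChi]

lemma sum_bFourier_sq_of_isBooleanFn {f : (Fin n → Bool) → ℝ} (hf : IsBooleanFn f) :
    ∑ S, bFourier f S ^ 2 = 1 := by
  have hf2 (x : Fin n → Bool) : f x * f x = 1 := by rcases hf x with h | h <;> simp [h]
  simpa [hf2, bExpect_const, sq] using (bExpect_mul_eq_sum_bFourier_mul f f).symm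

lemma bFourier_empty (f : (Fin n → Bool) → ℝ) : bFourier f ∅ = bExpect f := by
  simp [bFourier, bChi]

end Fourier

section Derivative

variable {n : ℕ}

noncomputable def bDeriv (f : (Fin n → Bool) → ℝ) (k : Fin n) (x : Fin n → Bool) : ℝ :=
  (f x - f (bFlip1 k x)) / 2

lemma bFourier_bDeriv (f : (Fin n → Bool) → ℝ) (k : Fin n) (S : Finset (Fin n)) :
    bFourier (bDeriv f k) S = if k ∈ S then bFourier f S else 0 := by
  have hflip :
      ∑ x, f (bFlip1 k x) * bChi S x = (if k ∈ S then -1 else 1) * ∑ x, f x * bChi S x := by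
    rw [← sum_comp_bFlip1 k, mul_sum]
    refine sum_congr rfl fun x _ => ?_
    rw [bFlip1_involutive k x, bChi_bFlip1]; ring
  have hsum : ∑ x, bDeriv f k x * bChi S x =
      (∑ x, f x * bChi S x - ∑ x, f (bFlip1 k x) * bChi S x) / 2 := by
    rw [← sum_sub_distrib, sum_div]
    exact sum_congr rfl fun x _ => by rw [bDeriv]; ring
  rw [bFourier, bExpect, hsum, hflip]
  split_ifs <;> simp [bFourier, bExpect]

lemma bDeriv_pow_three {f : (Fin n → Bool) → ℝ} (hf : IsBooleanFn f) (k : Fin n)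
    (x : Fin n → Bool) : bDeriv f k x ^ 3 = bDeriv f k x := by
  rcases hf x with h | h <;> rcases hf (bFlip1 k x) with h' | h' <;> norm_num [bDeriv, h, h']

lemma inflS_eq_bExpect_bDeriv_sq (f : (Fin n → Bool) → ℝ) (k : Fin n) :
    inflS f k = bExpect (fun x => bDeriv f k x ^ 2) := by
  simp_rw [sq, bExpect_mul_eq_sum_bFourier_mul, bFourier_bDeriv, inflS, sum_filter]
  exact sum_congr rfl fun S _ => by split_ifs <;> simp [sq]

noncomputable def bNoise (ρ : ℝ) (g : (Fin n → Bool) → ℝ) (x : Fin n → Bool) : ℝ :=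
  ∑ S, ρ ^ S.card * bFourier g S * bChi S x

lemma bExpect_mul_bNoise (ρ : ℝ) (g : (Fin n → Bool) → ℝ) :
    bExpect (fun x => g x * bNoise ρ g x) = ∑ S, ρ ^ S.card * bFourier g S ^ 2 := by
  simp_rw [bNoise, bExpect_mul_sum_bChi]
  exact sum_congr rfl fun S _ => by ring

end Derivative

section Bonami

variable {n : ℕ}

lemma bExpect_add_bSgn_mul_pow_four {j : Fin n} {G H : (Fin n → Bool) → ℝ}
    (hG : ∀ x, G (bFlip1 j x) = G x) (hH : ∀ x, H (bFlip1 j x) = H x) :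
    bExpect (fun x => (G x + bSgn (x j) * H x) ^ 4) =
      bExpect (fun x => G x ^ 4) + 6 * bExpect (fun x => G x ^ 2 * H x ^ 2) +
        bExpect (fun x => H x ^ 4) := by
  have hodd := sum_bSgn_mul_eq_zero (u := fun x => 4 * G x ^ 3 * H x + 4 * G x * H x ^ 3)
    fun x => by rw [hG, hH]
  have hexpand (x : Fin n → Bool) : (G x + bSgn (x j) * H x) ^ 4 =
      G x ^ 4 + 6 * (G x ^ 2 * H x ^ 2) + H x ^ 4 +
        bSgn (x j) * (4 * G x ^ 3 * H x + 4 * G x * H x ^ 3) := by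
    linear_combination (6 * G x ^ 2 * H x ^ 2 + (bSgn (x j) ^ 2 + 1) * H x ^ 4 +
      4 * bSgn (x j) * G x * H x ^ 3) * bSgn_sq (x j)
  simp only [bExpect, hexpand, sum_add_distrib, hodd, ← mul_sum]
  ring

theorem bExpect_sum_bChi_pow_four_le (J : Finset (Fin n)) (a : Finset (Fin n) → ℝ) :
    bExpect (fun x => (∑ S ∈ J.powerset, a S * bChi S x) ^ 4) ≤
      (∑ S ∈ J.powerset, 3 ^ S.card * a S ^ 2) ^ 2 := by
  induction J using Finset.induction_on generalizing a with
  | empty => simp [bChi, bExpect_const, ← pow_mul]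
  | @insert j J hj ih =>
    set G := fun x => ∑ T ∈ J.powerset, a T * bChi T x
    set H := fun x => ∑ T ∈ J.powerset, a (insert j T) * bChi T x
    set A := ∑ T ∈ J.powerset, 3 ^ T.card * a T ^ 2
    set B := ∑ T ∈ J.powerset, 3 ^ T.card * a (insert j T) ^ 2
    have hjT : ∀ T ∈ J.powerset, j ∉ T := fun T hT hjT => hj (mem_powerset.1 hT hjT)
    have hsplit (x : Fin n → Bool) :
        ∑ S ∈ (insert j J).powerset, a S * bChi S x = G x + bSgn (x j) * H x := by
      rw [sum_powerset_insert hj, mul_sum]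
      congr 1
      refine sum_congr rfl fun T hT => ?_
      rw [bChi, prod_insert (hjT T hT), ← bChi]
      ring
    have hinv (b : Finset (Fin n) → ℝ) (x : Fin n → Bool) :
        ∑ T ∈ J.powerset, b T * bChi T (bFlip1 j x) = ∑ T ∈ J.powerset, b T * bChi T x :=
      sum_congr rfl fun T hT => by rw [bChi_bFlip1, if_neg (hjT T hT), one_mul]
    have hweights : ∑ S ∈ (insert j J).powerset, 3 ^ S.card * a S ^ 2 = A + 3 * B := by
      rw [sum_powerset_insert hj, mul_sum]
      congr 1
      exact sum_congr rfl fun T hT => by rw [card_insert_of_notMem (hjT T hT), pow_succ]; ring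
    have hA : 0 ≤ A := sum_nonneg fun T _ => by positivity
    have hB : 0 ≤ B := sum_nonneg fun T _ => by positivity
    have hGH : bExpect (fun x => G x ^ 2 * H x ^ 2) ≤ A * B := by
      refine le_of_sq_le_sq ?_ (mul_nonneg hA hB)
      calc bExpect (fun x => G x ^ 2 * H x ^ 2) ^ 2
          ≤ bExpect (fun x => G x ^ 4) * bExpect (fun x => H x ^ 4) := by
            have hcs := bExpect_mul_sq_le (fun x => G x ^ 2) (fun x => H x ^ 2)
            simp_rw [← pow_mul] at hcs
            exact hcs
        _ ≤ A ^ 2 * B ^ 2 :=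
            mul_le_mul (ih a) (ih _) (bExpect_nonneg fun x => by positivity) (sq_nonneg A)
        _ = (A * B) ^ 2 := by ring
    calc bExpect (fun x => (∑ S ∈ (insert j J).powerset, a S * bChi S x) ^ 4)
        = bExpect (fun x => G x ^ 4) + 6 * bExpect (fun x => G x ^ 2 * H x ^ 2) +
            bExpect (fun x => H x ^ 4) := by
          simp_rw [hsplit]
          exact bExpect_add_bSgn_mul_pow_four (hinv _) (hinv _)
      _ ≤ A ^ 2 + 6 * (A * B) + B ^ 2 := by gcongr; exacts [ih a, ih _]
      _ ≤ (∑ S ∈ (insert j J).powerset, 3 ^ S.card * a S ^ 2) ^ 2 := by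
          rw [hweights]; nlinarith

lemma bExpect_bNoise_pow_four_le (g : (Fin n → Bool) → ℝ) :
    bExpect (fun x => bNoise 3⁻¹ g x ^ 4) ≤ (∑ S, 3⁻¹ ^ S.card * bFourier g S ^ 2) ^ 2 := by
  have hweight (S : Finset (Fin n)) :
      (3 : ℝ) ^ S.card * (3⁻¹ ^ S.card * bFourier g S) ^ 2 =
        3⁻¹ ^ S.card * bFourier g S ^ 2 := by
    rw [mul_pow, ← pow_mul, inv_pow, inv_pow]; field_simp; ring
  simpa only [bNoise, powerset_univ, hweight, mul_assoc] using
    bExpect_sum_bChi_pow_four_le univ fun S => 3⁻¹ ^ S.card * bFourier g S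

lemma sum_inv_three_pow_mul_bFourier_sq_sq_le {g : (Fin n → Bool) → ℝ}
    (hg : ∀ x, g x ^ 3 = g x) :
    (∑ S, 3⁻¹ ^ S.card * bFourier g S ^ 2) ^ 2 ≤ bExpect (fun x => g x ^ 2) ^ 3 := by
  set Q := ∑ S, (3 : ℝ)⁻¹ ^ S.card * bFourier g S ^ 2
  set I := bExpect (fun x => g x ^ 2)
  set T := bNoise 3⁻¹ g
  set M := bExpect (fun x => g x ^ 2 * T x ^ 2)
  have hg4 (x : Fin n → Bool) : g x ^ 4 = g x ^ 2 := by rw [pow_succ, hg, sq]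
  have hQM : Q ^ 2 ≤ I * M := by
    have hcs := bExpect_mul_sq_le g fun x => g x ^ 2 * T x
    have hgT (x : Fin n → Bool) : g x * (g x ^ 2 * T x) = g x * T x := by
      rw [← mul_assoc, ← pow_succ', hg]
    have hgT2 (x : Fin n → Bool) : (g x ^ 2 * T x) ^ 2 = g x ^ 2 * T x ^ 2 := by
      rw [mul_pow, ← pow_mul, hg4]
    simp_rw [hgT, hgT2, T, bExpect_mul_bNoise] at hcs
    exact hcs
  have hMQ : M ^ 2 ≤ I * Q ^ 2 := by
    have hcs := bExpect_mul_sq_le (fun x => g x ^ 2) fun x => T x ^ 2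
    simp_rw [← pow_mul, hg4] at hcs
    exact hcs.trans (mul_le_mul_of_nonneg_left (bExpect_bNoise_pow_four_le g)
      (bExpect_nonneg fun x => sq_nonneg _))
  have hI : 0 ≤ I := bExpect_nonneg fun x => sq_nonneg _
  have hM : 0 ≤ M := bExpect_nonneg fun x => by positivity
  have hQ4 : Q ^ 2 * Q ^ 2 ≤ I ^ 3 * Q ^ 2 :=
    calc Q ^ 2 * Q ^ 2 ≤ (I * M) * (I * M) := mul_le_mul hQM hQM (sq_nonneg Q) (by positivity)
      _ = I ^ 2 * M ^ 2 := by ring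
      _ ≤ I ^ 2 * (I * Q ^ 2) := by gcongr
      _ = I ^ 3 * Q ^ 2 := by ring
  rcases (sq_nonneg Q).eq_or_lt with hQ0 | hQ0
  · rw [← hQ0]; positivity
  · exact le_of_mul_le_mul_right hQ4 hQ0

end Bonami

section KKL

open Real

variable {n : ℕ}

lemma sum_sum_filter_mem (t : Finset (Fin n) → ℝ) :
    ∑ k, ∑ S ∈ univ.filter (fun S : Finset (Fin n) => k ∈ S), t S =
      ∑ S, (S.card : ℝ) * t S := by
  simp_rw [sum_filter]
  rw [sum_comm]
  simp

lemma inflS_nonneg (f : (Fin n → Bool) → ℝ) (k : Fin n) : 0 ≤ inflS f k :=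
  sum_nonneg fun _ _ => sq_nonneg _

lemma totInfl_nonneg (f : (Fin n → Bool) → ℝ) : 0 ≤ totInfl f :=
  sum_nonneg fun _ _ => by positivity

lemma totInfl_eq_sum_inflS (f : (Fin n → Bool) → ℝ) : totInfl f = ∑ k, inflS f k :=
  (sum_sum_filter_mem _).symm

lemma sum_mem_inv_three_pow_mul_bFourier_sq_le {f : (Fin n → Bool) → ℝ} (hf : IsBooleanFn f)
    (k : Fin n) :
    ∑ S ∈ univ.filter (fun S : Finset (Fin n) => k ∈ S), 3⁻¹ ^ S.card * bFourier f S ^ 2 ≤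
      √(inflS f k) * inflS f k := by
  have h := sum_inv_three_pow_mul_bFourier_sq_sq_le (bDeriv_pow_three hf k)
  have hsum : ∑ S, 3⁻¹ ^ S.card * bFourier (bDeriv f k) S ^ 2 =
      ∑ S ∈ univ.filter (fun S : Finset (Fin n) => k ∈ S),
        3⁻¹ ^ S.card * bFourier f S ^ 2 := by
    rw [sum_filter]
    exact sum_congr rfl fun S _ => by rw [bFourier_bDeriv]; split_ifs <;> simp
  rw [hsum, ← inflS_eq_bExpect_bDeriv_sq] at h
  refine le_of_sq_le_sq (h.trans_eq ?_) (mul_nonneg (sqrt_nonneg _) (inflS_nonneg f k))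
  rw [mul_pow, sq_sqrt (inflS_nonneg f k)]
  ring

lemma exp_neg_two_mul_totInfl_le {f : (Fin n → Bool) → ℝ} (hf : IsBooleanFn f)
    (hE : bExpect f = 0) :
    exp (-2 * totInfl f) ≤ ∑ S, (S.card : ℝ) * (3⁻¹ ^ S.card * bFourier f S ^ 2) := by
  have hjensen := convexOn_exp.map_sum_le (t := univ) (w := fun S => bFourier f S ^ 2)
    (p := fun S : Finset (Fin n) => -2 * (S.card : ℝ)) (fun S _ => sq_nonneg _)
    (sum_bFourier_sq_of_isBooleanFn hf) fun _ _ => Set.mem_univ _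
  have hmean : ∑ S, bFourier f S ^ 2 • (-2 * (S.card : ℝ)) = -2 * totInfl f := by
    simp only [totInfl, smul_eq_mul, mul_sum]
    exact sum_congr rfl fun S _ => by ring
  rw [hmean] at hjensen
  refine hjensen.trans (sum_le_sum fun S _ => ?_)
  rcases S.eq_empty_or_nonempty with rfl | hS
  · simp [bFourier_empty, hE]
  have hexp : exp (-2 * (S.card : ℝ)) ≤ 3⁻¹ ^ S.card := by
    have h3 : (3 : ℝ) ≤ exp 2 := by linarith [add_one_le_exp 2]
    rw [mul_comm, exp_nat_mul, exp_neg]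
    gcongr
  have hcard : (1 : ℝ) ≤ S.card := by exact_mod_cast hS.card_pos
  calc bFourier f S ^ 2 • exp (-2 * (S.card : ℝ))
      ≤ 1 * (3⁻¹ ^ S.card * bFourier f S ^ 2) := by
        rw [smul_eq_mul, one_mul, mul_comm]; gcongr
    _ ≤ S.card * (3⁻¹ ^ S.card * bFourier f S ^ 2) := by gcongr

lemma exp_neg_six_mul_le_of_exp_neg_two_mul_le {I m : ℝ} (hI : 0 ≤ I) (h : exp (-2 * I) ≤ √m * I) :
    exp (-6 * I) ≤ m := by
  have hm : 0 ≤ m := by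
    by_contra hneg
    rw [sqrt_eq_zero'.2 (not_le.1 hneg).le, zero_mul] at h
    exact (exp_pos _).not_ge h
  have hIexp : I ^ 2 ≤ exp (2 * I) := by
    rw [two_mul, exp_add, sq]
    have := add_one_le_exp I
    gcongr <;> linarith
  have h4 : exp (-4 * I) ≤ m * exp (2 * I) :=
    calc exp (-4 * I) = exp (-2 * I) ^ 2 := by rw [sq, ← exp_add]; ring_nf
      _ ≤ (√m * I) ^ 2 := pow_le_pow_left₀ (exp_nonneg _) h 2
      _ = m * I ^ 2 := by rw [mul_pow, sq_sqrt hm]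
      _ ≤ m * exp (2 * I) := by gcongr
  have hsplit : exp (-6 * I) * exp (2 * I) = exp (-4 * I) := by rw [← exp_add]; ring_nf
  exact le_of_mul_le_mul_right (hsplit ▸ h4) (exp_pos _)

end KKL

theorem kkl_edge_isoperimetric :
    ∃ c : ℝ, 0 < c ∧ ∀ (n : ℕ) (f : (Fin n → Bool) → ℝ), IsBooleanFn f →
      bExpect f = 0 →
      ∃ k : Fin n, Real.exp (-c * totInfl f) ≤ inflS f k := by
  refine ⟨6, by norm_num, fun n f hf hE => ?_⟩
  have hlow := exp_neg_two_mul_totInfl_le hf hE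
  rw [← sum_sum_filter_mem] at hlow
  obtain ⟨k, -, hk⟩ := exists_max_image univ (inflS f)
    (nonempty_of_sum_ne_zero ((Real.exp_pos _).trans_le hlow).ne')
  refine ⟨k, exp_neg_six_mul_le_of_exp_neg_two_mul_le (totInfl_nonneg f) (hlow.trans ?_)⟩
  calc _ ≤ ∑ j, √(inflS f j) * inflS f j :=
        sum_le_sum fun j _ => sum_mem_inv_three_pow_mul_bFourier_sq_le hf j
    _ ≤ ∑ j, √(inflS f k) * inflS f j := by
        gcongr with j
        · exact inflS_nonneg f j
        · exact hk j (mem_univ j)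
    _ = √(inflS f k) * totInfl f := by rw [← mul_sum, totInfl_eq_sum_inflS]
end

section
/- For a Boolean function f : {-1,1}^n → {-1,1} and distinct k, l ∈ [n], the second-order influence satisfies I_{{k,l}}(f) = ∑_{S ⊇ {k,l}} f̂(S)² = P_x(k ∈ 𝒫(x) and l ∈ 𝒫(x)), where 𝒫(x) = {j : f(x) ≠ f(μ_j(x))} is the pivotal set of x. -/
open Finset

lemma sum_prod_eq (n : ℕ) (a : Fin n → ℝ) :
    ∑ S : Finset (Fin n), ∏ i ∈ S, a i = ∏ i, (1 + a i) := by
  rw [Fintype.prod_add (fun _ => (1:ℝ)) a]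
  simp only [Finset.prod_const_one, one_mul]
  exact (Fintype.sum_bijective compl (Function.Involutive.bijective compl_compl)
    (fun S => ∏ i ∈ Sᶜ, a i) (fun S => ∏ i ∈ S, a i) (fun S => rfl)).symm

lemma sum_chi_mul (n : ℕ) (x y : Fin n → Bool) :
    ∑ S : Finset (Fin n), bChi S x * bChi S y
      = if x = y then (2:ℝ) ^ n else 0 := by
  have h : ∀ S : Finset (Fin n), bChi S x * bChi S y
      = ∏ i ∈ S, (bSgn (x i) * bSgn (y i)) := by
    intro S; rw [bChi, bChi, ← Finset.prod_mul_distrib]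
  simp_rw [h]
  rw [sum_prod_eq]
  split_ifs with hxy
  · subst hxy
    have : ∀ i, (1 : ℝ) + bSgn (x i) * bSgn (x i) = 2 := by
      intro i; cases x i <;> norm_num [bSgn]
    simp [this]
  · obtain ⟨i, hi⟩ := Function.ne_iff.mp hxy
    apply Finset.prod_eq_zero (Finset.mem_univ i)
    cases hx : x i <;> cases hy : y i <;> simp_all [bSgn]

lemma plancherel (n : ℕ) (g h : (Fin n → Bool) → ℝ) :
    ∑ S : Finset (Fin n), bFourier g S * bFourier h S
      = bExpect (fun x => g x * h x) := by
  have step : ∀ S : Finset (Fin n), bFourier g S * bFourier h S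
      = (∑ x : Fin n → Bool, ∑ y : Fin n → Bool,
          g x * bChi S x * (h y * bChi S y)) / ((2:ℝ) ^ n * 2 ^ n) := by
    intro S
    rw [bFourier, bFourier, bExpect, bExpect, div_mul_div_comm, Finset.sum_mul_sum]
  simp_rw [step, ← Finset.sum_div]
  rw [Finset.sum_comm]
  have key : ∀ x : Fin n → Bool,
      (∑ S : Finset (Fin n), ∑ y : Fin n → Bool, g x * bChi S x * (h y * bChi S y))
        = g x * h x * 2 ^ n := by
    intro x
    rw [Finset.sum_comm]
    have inner : ∀ y : Fin n → Bool,
        (∑ S : Finset (Fin n), g x * bChi S x * (h y * bChi S y))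
          = g x * h y * (if x = y then (2:ℝ)^n else 0) := by
      intro y
      rw [← sum_chi_mul n x y, Finset.mul_sum]
      apply Finset.sum_congr rfl; intro S _; ring
    simp_rw [inner]
    rw [Finset.sum_eq_single x]
    · simp
    · intro y _ hy
      rw [if_neg (Ne.symm hy), mul_zero]
    · simp
  simp_rw [key]
  rw [← Finset.sum_mul, bExpect]
  have h2 : (2:ℝ) ^ n ≠ 0 := by positivity
  field_simp

lemma bFlip1_invol {n : ℕ} (k : Fin n) : Function.Involutive (bFlip1 (n := n) k) := by
  intro x; funext i
  by_cases h : i = k <;> simp [bFlip1, Function.update_apply, h]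

lemma chi_flip {n : ℕ} (S : Finset (Fin n)) (k : Fin n) (x : Fin n → Bool) :
    bChi S (bFlip1 k x) = (if k ∈ S then -1 else 1) * bChi S x := by
  by_cases hk : k ∈ S
  · rw [if_pos hk, bChi, bChi, ← Finset.mul_prod_erase S _ hk,
      ← Finset.mul_prod_erase S (fun i => bSgn (x i)) hk]
    have h1 : bSgn (bFlip1 k x k) = - bSgn (x k) := by
      have hb : bFlip1 k x k = !(x k) := by simp [bFlip1]
      rw [hb]; cases x k <;> simp [bSgn]
    have h2 : ∀ i ∈ S.erase k, bSgn (bFlip1 k x i) = bSgn (x i) := by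
      intro i hi
      have : i ≠ k := Finset.ne_of_mem_erase hi
      simp [bFlip1, Function.update_apply, this]
    rw [Finset.prod_congr rfl h2, h1]; ring
  · rw [if_neg hk, one_mul, bChi, bChi]
    apply Finset.prod_congr rfl
    intro i hi
    have : i ≠ k := fun h => hk (h ▸ hi)
    simp [bFlip1, Function.update_apply, this]

lemma deriv_fourier {n : ℕ} (f : (Fin n → Bool) → ℝ) (k : Fin n) (S : Finset (Fin n)) :
    bFourier (fun x => (f x - f (bFlip1 k x)) / 2) S
      = if k ∈ S then bFourier f S else 0 := by
  have hsum : (∑ x : Fin n → Bool, f (bFlip1 k x) * bChi S x)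
      = (if k ∈ S then -1 else 1) * ∑ x : Fin n → Bool, f x * bChi S x := by
    rw [Finset.mul_sum]
    rw [← Fintype.sum_bijective (bFlip1 k) (bFlip1_invol k).bijective _ _ (fun x => rfl)]
    apply Finset.sum_congr rfl
    intro x _
    rw [(bFlip1_invol k) x, chi_flip]; ring
  rw [bFourier, bExpect]
  have : (∑ x : Fin n → Bool, (f x - f (bFlip1 k x)) / 2 * bChi S x)
      = ((∑ x : Fin n → Bool, f x * bChi S x)
        - (∑ x : Fin n → Bool, f (bFlip1 k x) * bChi S x)) / 2 := by
    rw [← Finset.sum_sub_distrib, Finset.sum_div]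
    apply Finset.sum_congr rfl
    intro x _; ring
  rw [this, hsum]
  by_cases hk : k ∈ S
  · rw [if_pos hk, if_pos hk, bFourier, bExpect]; ring
  · rw [if_neg hk, if_neg hk]; ring

lemma pointwise {n : ℕ} (f : (Fin n → Bool) → ℝ) (hf : IsBooleanFn f) (k l : Fin n)
    (x : Fin n → Bool) :
    (if f x ≠ f (bFlip1 k x) ∧ f x ≠ f (bFlip1 l x) then (1:ℝ) else 0)
      = ((f x - f (bFlip1 k x)) / 2) * ((f x - f (bFlip1 l x)) / 2) := by
  rcases hf x with h1 | h1 <;> rcases hf (bFlip1 k x) with h2 | h2 <;>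
    rcases hf (bFlip1 l x) with h3 | h3 <;> rw [h1, h2, h3] <;> norm_num

theorem second_order_influence (n : ℕ) (f : (Fin n → Bool) → ℝ)
    (hf : IsBooleanFn f) (k l : Fin n) (hkl : k ≠ l) :
    ∑ S ∈ univ.filter (fun S : Finset (Fin n) => {k, l} ⊆ S), bFourier f S ^ 2
      = bExpect (fun x => if f x ≠ f (bFlip1 k x) ∧ f x ≠ f (bFlip1 l x) then 1 else 0) := by
  have lhs : ∑ S ∈ univ.filter (fun S : Finset (Fin n) => {k, l} ⊆ S), bFourier f S ^ 2
      = ∑ S : Finset (Fin n),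
          bFourier (fun x => (f x - f (bFlip1 k x)) / 2) S
            * bFourier (fun x => (f x - f (bFlip1 l x)) / 2) S := by
    rw [Finset.sum_filter]
    apply Finset.sum_congr rfl
    intro S _
    rw [deriv_fourier, deriv_fourier]
    by_cases hk : k ∈ S <;> by_cases hl : l ∈ S <;>
      simp [hk, hl, Finset.insert_subset_iff, sq]
  rw [lhs, plancherel]
  unfold bExpect
  congr 1
  apply Finset.sum_congr rfl
  intro x _
  exact (pointwise f hf k l x).symm
end
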